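/- Let A ∈ ℝ^{p×n}, G ∈ ℝ^{q×n}, H ∈ ℝ^{q×q}, c ∈ ℝⁿ, b ∈ ℝᵖ, h ∈ ℝ^q, and let τ > 0, κ ∈ ℝ. Suppose (Δx₁, Δy₁, Δz₁) solves the block system AᵀΔy₁ + GᵀΔz₁ = r_x, −AΔx₁ = r_y, −HGΔx₁ + Δz₁ = H r_z + r_s, and (Δx₂, Δy₂, Δz₂) solves AᵀΔy₂ + GᵀΔz₂ = c, −AΔx₂ = b, −HGΔx₂ + Δz₂ = H h, and suppose the scalar d = κ/τ + cᵀΔx₂ + bᵀΔy₂ + hᵀΔz₂ is nonzero. Define Δτ = ( r_τ + r_κ/τ + cᵀΔx₁ + bᵀΔy₁ + hᵀΔz₁ ) / d, Δx = Δx₁ − Δτ·Δx₂, Δy = Δy₁ − Δτ·Δy₂, Δz = Δz₁ − Δτ·Δz₂, Δs = −GΔx + Δτ·h − r_z, and Δκ = (r_κ − κΔτ)/τ. Then (Δx, Δy, Δz, Δs, Δτ, Δκ) solves the Newton system: AᵀΔy + GᵀΔz + cΔτ = r_x, −AΔx + bΔτ = r_y, −GΔx + hΔτ − Δs = r_z,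 −cᵀΔx − bᵀΔy − hᵀΔz − Δκ = r_τ, Δz + HΔs = r_s, and τΔκ + κΔτ = r_κ. -/

import Mathlib

open Matrix

/-- block elimination for the full Newton system of the homogeneous
self-dual embedding.  Given solutions `(Δx₁,Δy₁,Δz₁)` and `(Δx₂,Δy₂,Δz₂)` of the two
`3×3` block subsystems, and the scalar `d = κ/τ + cᵀΔx₂ + bᵀΔy₂ + hᵀΔz₂ ≠ 0`, the
indicated formulas for `(Δx, Δy, Δz, Δs, Δτ, Δκ)` solve the Newton system. -/
theorem newton_system_block_elimination {p n q : ℕ}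
    (A : Matrix (Fin p) (Fin n) ℝ) (G : Matrix (Fin q) (Fin n) ℝ)
    (H : Matrix (Fin q) (Fin q) ℝ)
    (c : Fin n → ℝ) (b : Fin p → ℝ) (h : Fin q → ℝ)
    (τ κ : ℝ) (hτ : 0 < τ)
    (rx : Fin n → ℝ) (ry : Fin p → ℝ) (rz rs : Fin q → ℝ) (rτ rκ : ℝ)
    (Δx₁ Δx₂ : Fin n → ℝ) (Δy₁ Δy₂ : Fin p → ℝ) (Δz₁ Δz₂ : Fin q → ℝ)
    (h11 : Aᵀ *ᵥ Δy₁ + Gᵀ *ᵥ Δz₁ = rx)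
    (h12 : -(A *ᵥ Δx₁) = ry)
    (h13 : -((H * G) *ᵥ Δx₁) + Δz₁ = H *ᵥ rz + rs)
    (h21 : Aᵀ *ᵥ Δy₂ + Gᵀ *ᵥ Δz₂ = c)
    (h22 : -(A *ᵥ Δx₂) = b)
    (h23 : -((H * G) *ᵥ Δx₂) + Δz₂ = H *ᵥ h)
    (d : ℝ) (hd : d = κ / τ + c ⬝ᵥ Δx₂ + b ⬝ᵥ Δy₂ + h ⬝ᵥ Δz₂) (hd0 : d ≠ 0)
    (Δτ Δκ : ℝ) (Δx : Fin n → ℝ) (Δy : Fin p → ℝ) (Δz Δs : Fin q → ℝ)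
    (hΔτ : Δτ = (rτ + rκ / τ + c ⬝ᵥ Δx₁ + b ⬝ᵥ Δy₁ + h ⬝ᵥ Δz₁) / d)
    (hΔx : Δx = Δx₁ - Δτ • Δx₂)
    (hΔy : Δy = Δy₁ - Δτ • Δy₂)
    (hΔz : Δz = Δz₁ - Δτ • Δz₂)
    (hΔs : Δs = -(G *ᵥ Δx) + Δτ • h - rz)
    (hΔκ : Δκ = (rκ - κ * Δτ) / τ) :
    Aᵀ *ᵥ Δy + Gᵀ *ᵥ Δz + Δτ • c = rx ∧
    -(A *ᵥ Δx) + Δτ • b = ry ∧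
    -(G *ᵥ Δx) + Δτ • h - Δs = rz ∧
    -(c ⬝ᵥ Δx) - b ⬝ᵥ Δy - h ⬝ᵥ Δz - Δκ = rτ ∧
    Δz + H *ᵥ Δs = rs ∧
    τ * Δκ + κ * Δτ = rκ := by
  have hτ0 : τ ≠ 0 := ne_of_gt hτ
  have hτd : Δτ * d = rτ + rκ / τ + c ⬝ᵥ Δx₁ + b ⬝ᵥ Δy₁ + h ⬝ᵥ Δz₁ := by
    rw [hΔτ]; field_simp
  refine ⟨?_, ?_, ?_, ?_, ?_, ?_⟩
  · subst hΔy hΔz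
    rw [Matrix.mulVec_sub, Matrix.mulVec_sub, Matrix.mulVec_smul, Matrix.mulVec_smul]
    rw [← h11, ← h21]
    module
  · subst hΔx
    rw [Matrix.mulVec_sub, Matrix.mulVec_smul]
    rw [show A *ᵥ Δx₁ = -ry by rw [← h12]; ring_nf,
        show A *ᵥ Δx₂ = -b by rw [← h22]; ring_nf]
    module
  · rw [hΔs]; abel
  · have hS : c ⬝ᵥ Δx + b ⬝ᵥ Δy + h ⬝ᵥ Δz
        = (c ⬝ᵥ Δx₁ + b ⬝ᵥ Δy₁ + h ⬝ᵥ Δz₁) - Δτ * (c ⬝ᵥ Δx₂ + b ⬝ᵥ Δy₂ + h ⬝ᵥ Δz₂) := by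
      subst hΔx hΔy hΔz
      simp [dotProduct_sub, dotProduct_smul, smul_eq_mul]
      ring
    have hd2 : c ⬝ᵥ Δx₂ + b ⬝ᵥ Δy₂ + h ⬝ᵥ Δz₂ = d - κ / τ := by rw [hd]; ring
    rw [hΔκ]
    have : -(c ⬝ᵥ Δx) - b ⬝ᵥ Δy - h ⬝ᵥ Δz = -(c ⬝ᵥ Δx + b ⬝ᵥ Δy + h ⬝ᵥ Δz) := by ring
    rw [this, hS, hd2]
    have hτd' : Δτ * d * τ = rτ * τ + rκ + (c ⬝ᵥ Δx₁ + b ⬝ᵥ Δy₁ + h ⬝ᵥ Δz₁) * τ := by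
      rw [hΔτ]; field_simp; ring
    field_simp
    linear_combination hτd'
  · have key : Δz - (H * G) *ᵥ Δx = H *ᵥ rz + rs - Δτ • (H *ᵥ h) := by
      subst hΔx hΔz
      rw [Matrix.mulVec_sub, Matrix.mulVec_smul, ← h13, ← h23]
      module
    rw [hΔs]
    rw [Matrix.mulVec_sub, Matrix.mulVec_add, Matrix.mulVec_neg, Matrix.mulVec_smul]
    rw [show Δz = H *ᵥ rz + rs - Δτ • (H *ᵥ h) + (H * G) *ᵥ Δx from by rw [← key]; abel]
    rw [← Matrix.mulVec_mulVec]
    abel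
  · rw [hΔκ]; field_simp; ring
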